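/- For τ ∈ (0,1), the derivative with respect to τ of det(R_τ) equals −2τ·det(R_τ)·∑ᵢ λᵢ/(1 − τ²λᵢ), where R_τ has diagonal blocks R₁₁, R₂₂ and off-diagonal blocks τR₁₂, τR₂₁, and λᵢ are the eigenvalues of R₁₁^{−1/2} R₁₂ R₂₂^{−1} R₂₁ R₁₁^{−1/2}. In particular, if R₁₂ ≠ 0 then det(R_τ) is strictly decreasing in τ on (0,1). -/

import Mathlib

/-!
By the Schur complement with respect to `R₂₂`,
`det R_τ = det R₂₂ · det (R₁₁ - τ² R₁₂ R₂₂⁻¹ R₂₁)`, and writing `R₁₁ = S S` with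
`S = R₁₁^{1/2}` the second factor is `det (S (1 - τ² M) S) = det R₁₁ · ∏ᵢ (1 - τ² λᵢ)`.
The same congruence by `S` shows `M ⪰ 0` and that `1 - M` is positive definite because the
Schur complement `R₁₁ - R₁₂ R₂₂⁻¹ R₂₁` is, so `λᵢ ∈ [0, 1)` and every factor is positive on
`(0, 1)`. Differentiating the product gives the formula. If `R₁₂ ≠ 0` then `M ≠ 0`, so some
`λᵢ > 0` and the derivative is negative.
-/

open Matrix

/-- The square root of a positive semidefinite matrix, with its definition from the older Mathlib
(removed since). -/
noncomputable def Matrix.PosSemidef.sqrt {n 𝕜 : Type*} [Fintype n] [DecidableEq n] [RCLike 𝕜] [PartialOrder 𝕜]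
    {A : Matrix n n 𝕜} (hA : A.PosSemidef) : Matrix n n 𝕜 :=
  hA.1.eigenvectorUnitary.1 * diagonal ((↑) ∘ (√·) ∘ hA.1.eigenvalues) *
    (star hA.1.eigenvectorUnitary : Matrix n n 𝕜)

namespace Matrix

section Sqrt

variable {n : Type*} [Fintype n] [DecidableEq n] {A : Matrix n n ℝ}

lemma PosSemidef.sqrt_eq_cfc (hA : A.PosSemidef) : hA.sqrt = cfc Real.sqrt A := by
  rw [hA.1.cfc_eq, IsHermitian.cfc, Unitary.conjStarAlgAut_apply]
  rfl

lemma PosSemidef.sqrt_mul_self (hA : A.PosSemidef) : hA.sqrt * hA.sqrt = A := by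
  have := hA.1.isSelfAdjoint
  rw [hA.sqrt_eq_cfc, ← cfc_mul ..]
  conv_rhs => rw [← cfc_id ℝ A]
  refine cfc_congr fun x hx => Real.mul_self_sqrt ?_
  obtain ⟨i, rfl⟩ := hA.1.spectrum_real_eq_range_eigenvalues ▸ hx
  exact hA.eigenvalues_nonneg i

lemma PosSemidef.isHermitian_sqrt (hA : A.PosSemidef) : hA.sqrt.IsHermitian := by
  rw [hA.sqrt_eq_cfc]
  exact cfc_predicate _ _

lemma PosDef.isUnit_sqrt (hA : A.PosDef) : IsUnit hA.posSemidef.sqrt := by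
  rw [isUnit_iff_isUnit_det]
  refine isUnit_of_mul_isUnit_left (y := hA.posSemidef.sqrt.det) ?_
  rw [← det_mul, hA.posSemidef.sqrt_mul_self, ← isUnit_iff_isUnit_det]
  exact hA.isUnit

end Sqrt

lemma IsHermitian.det_one_sub_smul {n : Type*} [Fintype n] [DecidableEq n] {M : Matrix n n ℝ}
    (hM : M.IsHermitian) (c : ℝ) : (1 - c • M).det = ∏ i, (1 - c * hM.eigenvalues i) := by
  have : 1 - c • M = cfc (fun x => 1 - c * x) M := by
    rw [cfc_sub .., cfc_const_mul .., cfc_id' .., cfc_const_one ..]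
  rw [this, hM.cfc_eq]
  simp [IsHermitian.cfc, -Unitary.conjStarAlgAut_apply, det_diagonal]

lemma det_fromBlocks_smul {α m n : Type*} [CommRing α] [Fintype m] [Fintype n] [DecidableEq m]
    [DecidableEq n] (A : Matrix m m α) (B : Matrix m n α) (C : Matrix n m α) {D : Matrix n n α}
    (hD : IsUnit D) (t : α) :
    (fromBlocks A (t • B) (t • C) D).det = D.det * (A - t ^ 2 • (B * D⁻¹ * C)).det := by
  let := hD.invertible
  rw [det_fromBlocks₂₂, invOf_eq_nonsing_inv, Matrix.smul_mul, Matrix.smul_mul, Matrix.mul_smul,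
    smul_smul, ← sq]

section RCLike

variable {𝕜 m n : Type*} [RCLike 𝕜] [Fintype m] [Fintype n]

open scoped ComplexOrder

lemma PosDef.sub_mul_inv_mul_conjTranspose [DecidableEq m] [DecidableEq n] {A : Matrix m m 𝕜}
    {B : Matrix m n 𝕜} {D : Matrix n n 𝕜} (hR : (fromBlocks A B Bᴴ D).PosDef) (hD : D.PosDef) :
    (A - B * D⁻¹ * Bᴴ).PosDef := by
  let := hD.isUnit.invertible
  refine ((PosDef.fromBlocks₂₂ A B hD).mp hR.posSemidef).posDef_iff_det_ne_zero.mpr ?_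
  have hdet := hR.det_pos.ne'
  rw [det_fromBlocks₂₂, invOf_eq_nonsing_inv] at hdet
  exact right_ne_zero_of_mul hdet

lemma PosDef.mul_mul_conjTranspose_eq_zero_iff {P : Matrix n n 𝕜} (hP : P.PosDef)
    {C : Matrix m n 𝕜} : C * P * Cᴴ = 0 ↔ C = 0 := by
  refine ⟨fun h => ?_, fun h => by simp [h]⟩
  have hCx : ∀ x, Cᴴ *ᵥ x = 0 := fun x => by
    by_contra hx
    have := hP.dotProduct_mulVec_pos hx
    rw [star_mulVec, conjTranspose_conjTranspose, ← dotProduct_mulVec, mulVec_mulVec,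
      mulVec_mulVec, h, zero_mulVec, dotProduct_zero] at this
    exact this.false
  rw [← conjTranspose_eq_zero, ext_iff_mulVec]
  simpa using hCx

lemma IsHermitian.eigenvalues_lt_one [DecidableEq n] {M : Matrix n n 𝕜} (hM : M.IsHermitian)
    (h : (1 - M).PosDef) (i : n) : hM.eigenvalues i < 1 := by
  have hmem : 1 - hM.eigenvalues i ∈ spectrum ℝ (1 - M) := by
    rw [← map_one (algebraMap ℝ (Matrix n n 𝕜)), ← spectrum.singleton_sub_eq]
    exact Set.sub_mem_sub rfl (hM.spectrum_real_eq_range_eigenvalues ▸ ⟨i, rfl⟩)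
  obtain ⟨j, hj⟩ := h.1.spectrum_real_eq_range_eigenvalues ▸ hmem
  linarith [h.eigenvalues_pos j]

lemma PosSemidef.exists_eigenvalues_pos [DecidableEq n] {M : Matrix n n 𝕜} (hM : M.PosSemidef)
    (h : M ≠ 0) : ∃ i, 0 < hM.1.eigenvalues i := by
  obtain ⟨i, hi⟩ := Function.ne_iff.mp (mt hM.1.eigenvalues_eq_zero_iff.mp h)
  exact ⟨i, (hM.eigenvalues_nonneg i).lt_of_ne' hi⟩

end RCLike

section CanonicalCorrelation

variable {m n : Type*} [Fintype m] [Fintype n] [DecidableEq m] [DecidableEq n]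
  {A : Matrix m m ℝ} (hA : A.PosDef) (B : Matrix m n ℝ) {D : Matrix n n ℝ}

/-- `A^{-1/2} B D⁻¹ Bᵀ A^{-1/2}`: its eigenvalues are the squared canonical correlations of
`fromBlocks A B Bᵀ D`. -/
noncomputable def canonicalCorrelationMatrix (D : Matrix n n ℝ) : Matrix m m ℝ :=
  hA.posSemidef.sqrt⁻¹ * B * D⁻¹ * Bᵀ * hA.posSemidef.sqrt⁻¹

lemma sqrt_mul_canonicalCorrelationMatrix_mul_sqrt :
    hA.posSemidef.sqrt * canonicalCorrelationMatrix hA B D * hA.posSemidef.sqrt =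
      B * D⁻¹ * Bᵀ := by
  have hS := (isUnit_iff_isUnit_det _).mp hA.isUnit_sqrt
  simp only [canonicalCorrelationMatrix, Matrix.mul_assoc, nonsing_inv_mul _ hS, Matrix.mul_one,
    mul_nonsing_inv_cancel_left _ _ hS]

lemma sub_smul_eq_sqrt_mul_one_sub_smul_mul_sqrt (c : ℝ) :
    A - c • (B * D⁻¹ * Bᵀ) =
      hA.posSemidef.sqrt * (1 - c • canonicalCorrelationMatrix hA B D) * hA.posSemidef.sqrt := by
  rw [Matrix.mul_sub, Matrix.sub_mul, Matrix.mul_one, hA.posSemidef.sqrt_mul_self,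
    Matrix.mul_smul, Matrix.smul_mul, sqrt_mul_canonicalCorrelationMatrix_mul_sqrt]

lemma det_fromBlocks_smul_eq_prod (hD : D.PosDef)
    (hM : (canonicalCorrelationMatrix hA B D).IsHermitian) (t : ℝ) :
    (fromBlocks A (t • B) (t • Bᵀ) D).det =
      A.det * D.det * ∏ i, (1 - t ^ 2 * hM.eigenvalues i) := by
  rw [det_fromBlocks_smul _ _ _ hD.isUnit, sub_smul_eq_sqrt_mul_one_sub_smul_mul_sqrt hA, det_mul,
    det_mul, mul_right_comm, ← det_mul, hA.posSemidef.sqrt_mul_self, hM.det_one_sub_smul]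
  ring

lemma posSemidef_canonicalCorrelationMatrix (hD : D.PosDef) :
    (canonicalCorrelationMatrix hA B D).PosSemidef := by
  refine (IsUnit.posSemidef_star_left_conjugate_iff hA.isUnit_sqrt).mp ?_
  rw [star_eq_conjTranspose, hA.posSemidef.isHermitian_sqrt.eq,
    sqrt_mul_canonicalCorrelationMatrix_mul_sqrt, ← conjTranspose_eq_transpose_of_trivial]
  exact hD.inv.posSemidef.mul_mul_conjTranspose_same B

lemma posDef_one_sub_canonicalCorrelationMatrix (hD : D.PosDef)
    (hR : (fromBlocks A B Bᵀ D).PosDef) : (1 - canonicalCorrelationMatrix hA B D).PosDef := by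
  refine (IsUnit.posDef_star_left_conjugate_iff hA.isUnit_sqrt).mp ?_
  rw [star_eq_conjTranspose, hA.posSemidef.isHermitian_sqrt.eq,
    ← one_smul ℝ (canonicalCorrelationMatrix hA B D),
    ← sub_smul_eq_sqrt_mul_one_sub_smul_mul_sqrt, one_smul]
  rw [← conjTranspose_eq_transpose_of_trivial] at hR ⊢
  exact hR.sub_mul_inv_mul_conjTranspose hD

lemma canonicalCorrelationMatrix_ne_zero (hD : D.PosDef) (hB : B ≠ 0) :
    canonicalCorrelationMatrix hA B D ≠ 0 := by
  intro hM
  have hX := sqrt_mul_canonicalCorrelationMatrix_mul_sqrt hA B (D := D)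
  rw [hM, Matrix.mul_zero, Matrix.zero_mul, ← conjTranspose_eq_transpose_of_trivial] at hX
  exact hB (hD.inv.mul_mul_conjTranspose_eq_zero_iff.mp hX.symm)

end CanonicalCorrelation

end Matrix

lemma one_sub_sq_mul_pos {τ a : ℝ} (hτ : τ ∈ Set.Ioo (0 : ℝ) 1) (ha : a < 1) :
    0 < 1 - τ ^ 2 * a := by
  nlinarith [hτ.1, hτ.2]

section ProdOneSubSqMul

variable {ι : Type*} [Fintype ι] [DecidableEq ι] (μ : ι → ℝ)

lemma hasDerivAt_prod_one_sub_sq_mul {τ : ℝ} (hμ : ∀ i, 1 - τ ^ 2 * μ i ≠ 0) :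
    HasDerivAt (fun t => ∏ i, (1 - t ^ 2 * μ i))
      (-(2 * τ * (∏ i, (1 - τ ^ 2 * μ i)) * ∑ i, μ i / (1 - τ ^ 2 * μ i))) τ := by
  have hf : ∀ i ∈ Finset.univ, HasDerivAt (fun t => 1 - t ^ 2 * μ i) (-(2 * τ * μ i)) τ :=
    fun i _ => by simpa using ((hasDerivAt_pow 2 τ).mul_const (μ i)).const_sub 1
  refine (HasDerivAt.fun_finsetProd hf).congr_deriv ?_
  rw [Finset.mul_sum, ← Finset.sum_neg_distrib]
  refine Finset.sum_congr rfl fun i _ => ?_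
  rw [← Finset.mul_prod_erase Finset.univ _ (Finset.mem_univ i), smul_eq_mul]
  field_simp [hμ i]

lemma strictAntiOn_prod_one_sub_sq_mul (hμ0 : ∀ i, 0 ≤ μ i) (hμ1 : ∀ i, μ i < 1)
    (hμ : ∃ i, 0 < μ i) : StrictAntiOn (fun t => ∏ i, (1 - t ^ 2 * μ i)) (Set.Ioo 0 1) := by
  have hpos τ (hτ : τ ∈ Set.Ioo (0 : ℝ) 1) i : 0 < 1 - τ ^ 2 * μ i :=
    one_sub_sq_mul_pos hτ (hμ1 i)
  have hderiv τ (hτ : τ ∈ Set.Ioo (0 : ℝ) 1) :=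
    hasDerivAt_prod_one_sub_sq_mul μ fun i => (hpos τ hτ i).ne'
  refine strictAntiOn_of_hasDerivWithinAt_neg (convex_Ioo 0 1)
    (fun τ hτ => (hderiv τ hτ).continuousAt.continuousWithinAt)
    (fun τ hτ => (hderiv τ (interior_subset hτ)).hasDerivWithinAt) fun τ hτ => ?_
  rw [interior_Ioo] at hτ
  obtain ⟨i₀, hi₀⟩ := hμ
  have hsum : 0 < ∑ i, μ i / (1 - τ ^ 2 * μ i) :=
    Finset.sum_pos' (fun i _ => div_nonneg (hμ0 i) (hpos τ hτ i).le)
      ⟨i₀, Finset.mem_univ _, div_pos hi₀ (hpos τ hτ i₀)⟩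
  have hprod : 0 < ∏ i, (1 - τ ^ 2 * μ i) := Finset.prod_pos fun i _ => hpos τ hτ i
  exact neg_neg_of_pos (mul_pos (mul_pos (mul_pos two_pos hτ.1) hprod) hsum)

end ProdOneSubSqMul

/-- For `τ ∈ (0,1)`, `d/dτ det R_τ = −2τ · det R_τ · ∑ᵢ λᵢ/(1 − τ²λᵢ)`, where the `λᵢ` are
the eigenvalues of `R₁₁^{-1/2} R₁₂ R₂₂⁻¹ R₂₁ R₁₁^{-1/2}`; if `R₁₂ ≠ 0` then `det R_τ`
is strictly decreasing on `(0,1)`. -/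
theorem stmt3 {n₁ n₂ : ℕ}
    (R11 : Matrix (Fin n₁) (Fin n₁) ℝ) (R12 : Matrix (Fin n₁) (Fin n₂) ℝ)
    (R22 : Matrix (Fin n₂) (Fin n₂) ℝ)
    (hR : (Matrix.fromBlocks R11 R12 R12ᵀ R22).PosDef)
    (hR11 : R11.PosDef) (hR22 : R22.PosDef)
    (M : Matrix (Fin n₁) (Fin n₁) ℝ)
    (hMdef : M = hR11.posSemidef.sqrt⁻¹ * R12 * R22⁻¹ * R12ᵀ * hR11.posSemidef.sqrt⁻¹)
    (hM : M.IsHermitian) :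
    (∀ τ ∈ Set.Ioo (0:ℝ) 1,
      HasDerivAt (fun t : ℝ => (Matrix.fromBlocks R11 (t • R12) (t • R12ᵀ) R22).det)
        (-(2 * τ * (Matrix.fromBlocks R11 (τ • R12) (τ • R12ᵀ) R22).det *
          ∑ i, hM.eigenvalues i / (1 - τ ^ 2 * hM.eigenvalues i))) τ) ∧
    (R12 ≠ 0 →
      StrictAntiOn (fun t : ℝ => (Matrix.fromBlocks R11 (t • R12) (t • R12ᵀ) R22).det)
        (Set.Ioo (0:ℝ) 1)) := by
  obtain rfl : M = canonicalCorrelationMatrix hR11 R12 R22 := hMdef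
  have hdet := det_fromBlocks_smul_eq_prod hR11 R12 hR22 hM
  have hMpsd := posSemidef_canonicalCorrelationMatrix hR11 R12 hR22
  have hlt := hM.eigenvalues_lt_one (posDef_one_sub_canonicalCorrelationMatrix hR11 R12 hR22 hR)
  have hfun : (fun t : ℝ => (fromBlocks R11 (t • R12) (t • R12ᵀ) R22).det) =
      fun t => R11.det * R22.det * ∏ i, (1 - t ^ 2 * hM.eigenvalues i) := funext hdet
  refine ⟨fun τ hτ => ?_, fun hB => ?_⟩
  · have hpos i := one_sub_sq_mul_pos hτ (hlt i)
    rw [hfun, hdet τ]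
    exact ((hasDerivAt_prod_one_sub_sq_mul hM.eigenvalues fun i => (hpos i).ne').const_mul
      (R11.det * R22.det)).congr_deriv (by ring)
  · have hanti := strictAntiOn_prod_one_sub_sq_mul hM.eigenvalues hMpsd.eigenvalues_nonneg hlt
      (hMpsd.exists_eigenvalues_pos (canonicalCorrelationMatrix_ne_zero hR11 R12 hR22 hB))
    rw [hfun]
    exact fun a ha b hb hab =>
      mul_lt_mul_of_pos_left (hanti ha hb hab) (mul_pos hR11.det_pos hR22.det_pos)
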